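/- Let X ∈ ℝ^{m×N} have full column rank, set H = XᵀX, and let H⁻¹ = L Lᵀ be the Cholesky decomposition with L lower triangular with positive diagonal entries. Then for every t = 1,…,N−1: [(X_{≥t}ᵀ X_{≥t})⁻¹]_{≥2,1} / [(X_{≥t}ᵀ X_{≥t})⁻¹]₁₁ = L_{≥t+1,t} / L_{tt} ∈ ℝ^{N−t}, i.e., the first column of the inverse Hessian of the trailing block, with first entry removed and normalized by its (1,1) entry, equals the subdiagonal part of the t-th column of L divided by L_{tt}. -/

import Mathlib

open Matrix

set_option maxHeartbeats 1000000

/-- **Inverse Hessian columns from the Cholesky factor.**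
Let `X ∈ ℝ^{m×N}` have full column rank, `H = XᵀX`, and `H⁻¹ = L Lᵀ` the Cholesky
decomposition (`L` lower triangular with positive diagonal).  Then for every
`t = 1,…,N−1`,
`[(X_{≥t}ᵀX_{≥t})⁻¹]_{≥2,1} / [(X_{≥t}ᵀX_{≥t})⁻¹]₁₁ = L_{≥t+1,t} / L_{tt} ∈ ℝ^{N−t}`. -/
theorem inverse_hessian_column_eq_cholesky_column {m N : ℕ}
    (X : Matrix (Fin m) (Fin N) ℝ) (hX : IsUnit (Xᵀ * X).det)
    (L : Matrix (Fin N) (Fin N) ℝ)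
    (hLlow : ∀ i j : Fin N, i < j → L i j = 0)
    (hLdiag : ∀ i : Fin N, 0 < L i i)
    (hChol : (Xᵀ * X)⁻¹ = L * Lᵀ) :
    ∀ (t : ℕ) (ht1 : 1 ≤ t) (ht2 : t ≤ N - 1),
      ∀ At : Matrix (Fin m) (Fin (N - t + 1)) ℝ,
        At = (Matrix.of fun i (j : Fin (N - t + 1)) =>
          X i ⟨t - 1 + j.val, by have := j.isLt; omega⟩) →
      (fun j : Fin (N - t) =>
          (Atᵀ * At)⁻¹ ⟨j.val + 1, by have := j.isLt; omega⟩ 0 / (Atᵀ * At)⁻¹ 0 0) =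
        fun j : Fin (N - t) =>
          L ⟨t + j.val, by have := j.isLt; omega⟩ ⟨t - 1, by omega⟩ /
            L ⟨t - 1, by omega⟩ ⟨t - 1, by omega⟩ := by
  classical
  have sum_restrict_aux : ∀ {N t : ℕ} (ht1 : 1 ≤ t) (ht2 : t ≤ N - 1)
      (g : Fin N → ℝ) (hg : ∀ i : Fin N, i.val < t - 1 → g i = 0),
      ∑ i : Fin N, g i = ∑ k : Fin (N - t + 1), g ⟨t - 1 + k.val, by have := k.isLt; omega⟩ := by
    intro N t ht1 ht2 g hg
    classical
    set f : Fin (N - t + 1) → Fin N := fun k => ⟨t - 1 + k.val, by have := k.isLt; omega⟩ with hf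
    have hinj : Function.Injective f := by
      intro a b hab
      have : t - 1 + a.val = t - 1 + b.val := congrArg Fin.val hab
      exact Fin.ext (by omega)
    have h1 : ∑ k : Fin (N - t + 1), g (f k) = ∑ i ∈ Finset.univ.image f, g i :=
      (Finset.sum_image (fun a _ b _ h => hinj h)).symm
    have h2 : ∑ i ∈ Finset.univ.image f, g i = ∑ i : Fin N, g i := by
      apply Finset.sum_subset (Finset.subset_univ _)
      intro i _ hi
      apply hg
      by_contra hlt
      push_neg at hlt
      apply hi
      have hiN : i.val < N := i.isLt
      refine Finset.mem_image.2 ⟨⟨i.val - (t - 1), by omega⟩, Finset.mem_univ _, ?_⟩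
      exact Fin.ext (by simp [hf]; omega)
    rw [← h2, ← h1]
  intro t ht1 ht2 At hAt
  set H : Matrix (Fin N) (Fin N) ℝ := Xᵀ * X with hH
  set f : Fin (N - t + 1) → Fin N := fun k => ⟨t - 1 + k.val, by have := k.isLt; omega⟩ with hf
  set s : Fin N := ⟨t - 1, by omega⟩ with hs
  set B : Matrix (Fin (N - t + 1)) (Fin (N - t + 1)) ℝ := Atᵀ * At with hBdef
  -- B is the trailing principal submatrix of H
  have hB : B = H.submatrix f f := by
    ext k k'
    simp [hBdef, hH, Matrix.mul_apply, hAt, hf]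
  -- X has trivial kernel
  have hHunit : IsUnit H := (Matrix.isUnit_iff_isUnit_det H).2 hX
  have hXker : ∀ y : Fin N → ℝ, X *ᵥ y = 0 → y = 0 := by
    intro y hy
    have hinj := Matrix.mulVec_injective_iff_isUnit.mpr hHunit
    have : H *ᵥ y = H *ᵥ 0 := by
      rw [hH, ← Matrix.mulVec_mulVec, hy, Matrix.mulVec_zero, Matrix.mulVec_zero]
    exact hinj this
  -- B is invertible
  have hBker : ∀ x : Fin (N - t + 1) → ℝ, B *ᵥ x = 0 → x = 0 := by
    intro x hx
    have hAx : At *ᵥ x = 0 := by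
      have h1 : (At *ᵥ x) ⬝ᵥ (At *ᵥ x) = 0 := by
        have : x ⬝ᵥ (B *ᵥ x) = 0 := by rw [hx]; simp
        rw [hBdef, ← Matrix.mulVec_mulVec, Matrix.dotProduct_mulVec,
          Matrix.vecMul_transpose] at this
        exact this
      exact dotProduct_self_eq_zero.mp h1
    -- extend x by zero
    set y : Fin N → ℝ := fun i =>
      if h : t - 1 ≤ i.val then x ⟨i.val - (t - 1), by have := i.isLt; omega⟩ else 0 with hy
    have hXy : X *ᵥ y = At *ᵥ x := by
      ext r
      show ∑ i : Fin N, X r i * y i = _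
      rw [sum_restrict_aux ht1 ht2 (fun i => X r i * y i)
        (fun i hi => by
          show X r i * y i = 0
          have hni : ¬ t - 1 ≤ i.val := by omega
          simp only [hy, hni, dif_neg, not_false_iff, mul_zero])]
      apply Finset.sum_congr rfl
      intro k _
      have : y ⟨t - 1 + k.val, by have := k.isLt; omega⟩ = x k := by
        have hk : t - 1 ≤ t - 1 + k.val := Nat.le_add_right _ _
        simp only [hy, hk, dif_pos]
        congr 1
        exact Fin.ext (by simp)
      rw [this, hAt]
      rfl
    have hy0 : y = 0 := hXker y (by rw [hXy, hAx])
    ext k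
    have : y (f k) = x k := by
      have hk : t - 1 ≤ (f k).val := Nat.le_add_right _ _
      simp only [hy, hf, hk, dif_pos]
      congr 1
      rw [dif_pos (Nat.le_add_right _ _)]
      congr 1
      apply Fin.ext
      show t - 1 + k.val - (t - 1) = k.val
      omega
    rw [← this, hy0]
    rfl
  have hBunit : IsUnit B.det := by
    rw [← Matrix.isUnit_iff_isUnit_det]
    rw [← Matrix.mulVec_injective_iff_isUnit]
    intro a b hab
    have : B *ᵥ (a - b) = 0 := by
      rw [Matrix.mulVec_sub, hab, sub_self]
    have := hBker _ this
    exact sub_eq_zero.mp this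
  -- H * L = (Lᵀ)⁻¹
  have hH1 : (H * L) * Lᵀ = 1 := by
    rw [mul_assoc, ← hChol]
    exact Matrix.mul_nonsing_inv H hX
  have hHL : Lᵀ⁻¹ = H * L := Matrix.inv_eq_left_inv hH1
  -- Lᵀ⁻¹ is upper triangular
  have hLT : Lᵀ.BlockTriangular id := fun i j hij => hLlow j i hij
  have hLTdet : IsUnit Lᵀ.det := by
    rw [Matrix.det_of_upperTriangular hLT]
    exact (Finset.prod_pos (fun i _ => hLdiag i)).ne'.isUnit
  haveI : Invertible Lᵀ := Lᵀ.invertibleOfIsUnitDet hLTdet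
  have hTriInv : Lᵀ⁻¹.BlockTriangular id := Matrix.blockTriangular_inv_of_blockTriangular hLT
  -- the key vector
  set w : Fin (N - t + 1) → ℝ := fun k => L (f k) s with hw
  set α : ℝ := Lᵀ⁻¹ s s with hα
  have hBw : B *ᵥ w = Pi.single 0 α := by
    ext k
    have hcol : (B *ᵥ w) k = (H * L) (f k) s := by
      show ∑ k' : Fin (N - t + 1), B k k' * w k' = _
      rw [Matrix.mul_apply]
      rw [sum_restrict_aux ht1 ht2 (fun i => H (f k) i * L i s)
        (fun i hi => by
          show H (f k) i * L i s = 0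
          rw [hLlow i s (by simpa [hs, Fin.lt_def] using hi), mul_zero])]
      apply Finset.sum_congr rfl
      intro k' _
      rw [hB]
      rfl
    rw [hcol, ← hHL]
    by_cases hk : k = 0
    · subst hk
      have : f 0 = s := Fin.ext (by simp [hf, hs])
      rw [this]
      simp [hα]
    · have hkpos : 0 < k.val := Nat.pos_of_ne_zero (fun h => hk (Fin.ext h))
      have hlt : s < f k := by rw [Fin.lt_def]; show t - 1 < t - 1 + k.val; omega
      rw [hTriInv hlt]
      rw [Pi.single_eq_of_ne hk]
  have hwk : ∀ k, w k = B⁻¹ k 0 * α := by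
    intro k
    have : B⁻¹ *ᵥ (B *ᵥ w) = w := by
      rw [Matrix.mulVec_mulVec, Matrix.nonsing_inv_mul B hBunit, Matrix.one_mulVec]
    conv_lhs => rw [← this, hBw, Matrix.mulVec_single]
    rfl
  have hαne : α ≠ 0 := by
    intro h0
    have := hwk 0
    rw [h0, mul_zero] at this
    have hf0 : f 0 = s := Fin.ext (by simp [hf, hs])
    rw [hw] at this
    simp only [hf0] at this
    exact (hLdiag s).ne' this
  funext j
  have key : ∀ k : Fin (N - t + 1), B⁻¹ k 0 / B⁻¹ 0 0 = w k / w 0 := by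
    intro k
    rw [hwk k, hwk 0, mul_div_mul_right _ _ hαne]
  have hfj : f ⟨j.val + 1, by have := j.isLt; omega⟩ =
      (⟨t + j.val, by have := j.isLt; omega⟩ : Fin N) := Fin.ext (by simp only [hf]; omega)
  have hf0 : f 0 = s := Fin.ext (by simp [hf, hs])
  show B⁻¹ ⟨j.val + 1, by have := j.isLt; omega⟩ 0 / B⁻¹ 0 0 = _
  rw [key]
  show L (f ⟨j.val + 1, by have := j.isLt; omega⟩) s / L (f 0) s = _
  rw [hfj, hf0]
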